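/- arXiv:1712.02507 — 4 statements merged into one kernel-verified Lean document; each statement's English description precedes it below -/
import Mathlib

section
/- The 2-Sylow subgroup P_n of S_n is isomorphic to the direct product of the groups H_{k} = P_{2^k} over all k in Bin(n), where Bin(n) is the set of exponents in the binary expansion of n. -/
/-!
The product `∏_{k ∈ Bin(n)} H_k` acts faithfully on the disjoint union of the sets `Fin (2 ^ k)`,
which has `∑_{k ∈ Bin(n)} 2 ^ k = n` elements, so it embeds into `S_n`. By Legendre's formula
`v₂(m!) = m - s₂(m)`, where `s₂` counts binary digits equal to one, its order is
`∏ 2 ^ (2 ^ k - 1) = 2 ^ (n - s₂(n)) = 2 ^ v₂(n!)`. Hence the image is a Sylow 2-subgroup of `S_n`,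
and all Sylow 2-subgroups are isomorphic.
-/

open Equiv Finset Function Nat

namespace Nat

theorem sum_digits_two_eq_length_bitIndices (n : ℕ) :
    (digits 2 n).sum = n.bitIndices.length := by
  induction n using binaryRec' with
  | zero => simp
  | bit b m hb ih =>
    have hdigits : digits 2 (bit b m) = b.toNat :: digits 2 m := by
      rw [bit_val, add_comm]
      exact digits_add 2 one_lt_two _ _ (Bool.toNat_lt b) (by cases b <;> simp_all)
    rw [hdigits]
    cases b
    · rw [bitIndices_bit_false]; simp [ih]
    · rw [bitIndices_bit_true]; simp [ih, add_comm]

theorem factorization_two_factorial (n : ℕ) :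
    (n !).factorization 2 = n - n.bitIndices.length := by
  simpa [factorization_def _ prime_two, sum_digits_two_eq_length_bitIndices]
    using sub_one_mul_padicValNat_factorial (p := 2) n

theorem factorization_two_factorial_two_pow (k : ℕ) : ((2 ^ k)!).factorization 2 = 2 ^ k - 1 := by
  rw [factorization_two_factorial, bitIndices_two_pow, List.length_singleton]

instance fintypeSubtypeTestBit (n : ℕ) : Fintype {k // n.testBit k} :=
  Fintype.subtype n.bitIndices.toFinset (by simp)

theorem sum_subtype_testBit {M : Type*} [AddCommMonoid M] (n : ℕ) (f : ℕ → M) :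
    ∑ k : {k // n.testBit k}, f k = (n.bitIndices.map f).sum := by
  rw [← sum_subtype n.bitIndices.toFinset (by simp), List.sum_toFinset _ bitIndices_nodup]

theorem card_subtype_testBit (n : ℕ) : Fintype.card {k // n.testBit k} = n.bitIndices.length := by
  rw [Fintype.card_of_subtype _ fun _ => List.mem_toFinset.trans mem_bitIndices,
    List.toFinset_card_of_nodup bitIndices_nodup]

theorem sum_subtype_testBit_two_pow (n : ℕ) : ∑ k : {k // n.testBit k}, 2 ^ (k : ℕ) = n := by
  rw [sum_subtype_testBit, sum_map_two_pow_bitIndices]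

theorem factorization_two_factorial_eq_sum (n : ℕ) :
    (n !).factorization 2 = ∑ k : {k // n.testBit k}, (2 ^ (k : ℕ) - 1) := by
  rw [sum_tsub_distrib _ fun _ _ => Nat.one_le_two_pow, sum_subtype_testBit_two_pow,
    factorization_two_factorial]
  simp [card_subtype_testBit]

end Nat

theorem Sylow.card_perm_fin {p : ℕ} [Fact p.Prime] {m : ℕ} (P : Sylow p (Perm (Fin m))) :
    Nat.card P = p ^ (m !).factorization p := by
  rw [P.card_eq_multiplicity, Nat.card_perm, Nat.card_fin]

theorem Sylow.nonempty_mulEquiv_of_injective {G K : Type*} [Group G] [Finite G] [Group K]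
    {p : ℕ} [Fact p.Prime] (P : Sylow p G) (f : K →* G) (hf : Injective f)
    (hcard : Nat.card K = Nat.card P) : Nonempty (P ≃* K) := by
  let e := (MonoidHom.ofInjective hf).symm
  let Q : Sylow p G := .ofCard f.range <| by
    rw [Nat.card_congr e.toEquiv, hcard, P.card_eq_multiplicity]
  exact ⟨(P.equiv Q).trans e⟩

/-- The 2-Sylow subgroup `P_n` of `S_n` is isomorphic to the direct product of the
groups `H_k = P_{2^k}` over all `k ∈ Bin(n)`, the set of exponents in the binary
expansion of `n` (i.e. those `k` with `n.testBit k = true`). -/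
theorem sylow_two_symm_iso_prod_of_binary (n : ℕ)
    (P : Sylow 2 (Equiv.Perm (Fin n)))
    (H : ∀ k : ℕ, Sylow 2 (Equiv.Perm (Fin (2 ^ k)))) :
    Nonempty (P ≃* (∀ k : {k : ℕ // n.testBit k}, H k.1)) := by
  let e : (Σ k : {k // n.testBit k}, Fin (2 ^ (k : ℕ))) ≃ Fin n :=
    Fintype.equivOfCardEq (by simp [sum_subtype_testBit_two_pow])
  let f := e.permCongrHom.toMonoidHom.comp <| (Perm.sigmaCongrRightHom _).comp <|
    MonoidHom.piMap fun k => (H k.1 : Subgroup (Perm (Fin (2 ^ k.1)))).subtype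
  have hf : Injective f := e.permCongrHom.injective.comp <|
    Perm.sigmaCongrRightHom_injective.comp <| Injective.piMap fun k => Subtype.val_injective
  refine P.nonempty_mulEquiv_of_injective f hf ?_
  rw [Nat.card_pi, prod_congr rfl fun k _ => (H k.1).card_perm_fin, prod_pow_eq_pow_sum,
    P.card_perm_fin, factorization_two_factorial_eq_sum]
  simp_rw [factorization_two_factorial_two_pow]
end

section
/- For a 1-2 binary tree T of height k, define Res(T) recursively: Res of the trivial tree is empty; if T has subtree multiset {T', T'} or {T'}, then Res(T) = {T'} × Res(T') (prepend T' to each forest in Res(T')); if T has two distinct subtrees T_1, T_2, then Res(T) = ({T_1} × Res(T_2)) ∪ ({T_2} × Res(T_1)). Then all elements of the multiset Res(T) are distinct, i.e., Res(T) is a set. -/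
/-- 1-2 binary trees of height `k` (with ordered children; a node carries one or two
subtrees of height one less). -/
inductive OTree : ℕ → Type
  | leaf : OTree 0
  | one {k : ℕ} : OTree k → OTree (k + 1)
  | two {k : ℕ} : OTree k → OTree k → OTree (k + 1)
  deriving DecidableEq

/-- A forest is a tuple of 1-2 binary trees (recorded with their heights). -/
abbrev Forest : Type := List (Σ k : ℕ, OTree k)

/-- The multiset `Res T` of forests obtained by restriction: `Res` of the trivial tree
contains just the empty forest; if `T` has subtree multiset `{T', T'}` or `{T'}` then
`Res T = {T'} × Res T'` (prepend `T'` to each forest of `Res T'`); if `T` has two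
distinct subtrees `T₁ ≠ T₂` then
`Res T = ({T₁} × Res T₂) ∪ ({T₂} × Res T₁)` (a multiset sum). -/
def Res : {k : ℕ} → OTree k → Multiset Forest
  | 0, .leaf => {[]}
  | k + 1, .one t => (Res t).map (fun f => ⟨k, t⟩ :: f)
  | k + 1, .two t₁ t₂ =>
      if t₁ = t₂ then (Res t₁).map (fun f => ⟨k, t₁⟩ :: f)
      else (Res t₂).map (fun f => ⟨k, t₁⟩ :: f) + (Res t₁).map (fun f => ⟨k, t₂⟩ :: f)

/-- All elements of the multiset `Res T` are distinct, i.e. `Res T` is a set. -/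
theorem res_nodup {k : ℕ} (T : OTree k) : (Res T).Nodup := by
  induction T with
  | leaf => simp [Res]
  | one t ih =>
      exact (Multiset.Nodup.map (fun a b h => by simpa using h) ih)
  | two t₁ t₂ ih₁ ih₂ =>
      rw [Res]
      split
      · exact (Multiset.Nodup.map (fun a b h => by simpa using h) ih₁)
      · next hne =>
        rw [Multiset.nodup_add]
        refine ⟨Multiset.Nodup.map (fun a b h => by simpa using h) ih₂,
          Multiset.Nodup.map (fun a b h => by simpa using h) ih₁, ?_⟩
        rw [Multiset.disjoint_left]
        intro f hf hg
        simp only [Multiset.mem_map] at hf hg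
        obtain ⟨a, _, ha⟩ := hf
        obtain ⟨b, _, hb⟩ := hg
        rw [← ha] at hb
        exact hne (show t₁ = t₂ by have := (List.cons_eq_cons.mp hb).1; simp at this; exact this.symm)
end

section
/- Every one-dimensional representation T of H_k contains exactly one one-dimensional representation of P_{2^k - 1} in its restriction to P_{2^k - 1}, where P_{2^k - 1} ≅ H_{k-1} × H_{k-2} × ... × H_0 is embedded in H_k. -/
open scoped Classical

/-- The cyclic group of order 2, written multiplicatively. -/
abbrev C2 : Type := Multiplicative (ZMod 2)

/-- The automorphism of `G × G` swapping the two coordinates. -/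
def swapAut (G : Type*) [Group G] : MulAut (G × G) :=
  (MulEquiv.prodComm : G × G ≃* G × G)

/-- The action of `C2` on `G × G` by swapping coordinates. -/
def swapHom (G : Type*) [Group G] : C2 →* MulAut (G × G) where
  toFun x := if x = 1 then 1 else swapAut G
  map_one' := if_pos rfl
  map_mul' := by
    have key : ∀ a : C2, a = 1 ∨ a = Multiplicative.ofAdd 1 := by decide
    have hss : swapAut G * swapAut G = 1 := by
      apply MulEquiv.ext; intro x; exact Prod.ext rfl rfl
    intro x y
    rcases key x with hx | hx <;> rcases key y with hy | hy <;> subst hx <;> subst hy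
    · simp
    · simp
    · simp
    · have h2 : (Multiplicative.ofAdd (1 : ZMod 2)) * Multiplicative.ofAdd 1 = 1 := by decide
      have hne : (Multiplicative.ofAdd (1 : ZMod 2)) ≠ 1 := by decide
      rw [h2]
      simp [hne, hss]

/-- The wreath product `G ≀ C2`, i.e. the semidirect product `(G × G) ⋊ C2` with
`C2` acting by swapping the coordinates. -/
abbrev Wr (G : Type*) [Group G] : Type _ := (G × G) ⋊[swapHom G] C2

/-- Auxiliary construction: the tower of iterated wreath products, with its group
structure. -/
def HgrpAux : ℕ → Σ G : Type, Group G
  | 0 => ⟨PUnit, inferInstance⟩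
  | k + 1 => ⟨@Wr (HgrpAux k).1 (HgrpAux k).2, by letI := (HgrpAux k).2; infer_instance⟩

/-- `Hgrp k` is the iterated wreath product `(⋯(1 ≀ C2) ≀ ⋯ ) ≀ C2`, a 2-Sylow subgroup
of `S_{2^k}`: `Hgrp 0` is trivial and `Hgrp (k+1) = (Hgrp k) ≀ C2`. -/
abbrev Hgrp (k : ℕ) : Type := (HgrpAux k).1

instance instGroupHgrp (k : ℕ) : Group ((HgrpAux k).1) := (HgrpAux k).2

/-- `Pgrp k` is the 2-Sylow subgroup of `S_{2^k - 1}`, namely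
`H_{k-1} × H_{k-2} × ⋯ × H_0`. -/
def Pgrp : ℕ → Type
  | 0 => PUnit
  | k + 1 => Hgrp k × Pgrp k

instance instGroupPgrp : ∀ k : ℕ, Group (Pgrp k)
  | 0 => inferInstanceAs (Group PUnit)
  | k + 1 => letI := instGroupPgrp k; inferInstanceAs (Group (Hgrp k × Pgrp k))

/-- The standard embedding of `P_{2^k-1} = H_{k-1} × P_{2^{k-1}-1}` into
`H_k = H_{k-1} ≀ C2`, sending `(h, p)` to `(h, ι p)` inside the base subgroup
`H_{k-1} × H_{k-1}`. -/
def iota : (k : ℕ) → Pgrp k →* Hgrp k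
  | 0 => 1
  | k + 1 => SemidirectProduct.inl.comp ((MonoidHom.id (Hgrp k)).prodMap (iota k))

/-!
A linear character of a finite group takes values in roots of unity, so `conj (ψ g) = (ψ g)⁻¹`
and the inner product of two linear characters `χ, ψ` is the sum of the character `χ / ψ`,
which vanishes unless `χ = ψ`. Hence the only linear character of `P_{2^k-1}` occurring in the
restriction of `T` is `T ∘ ι` itself.
-/

instance Hgrp.finite : ∀ k, Finite (Hgrp k)
  | 0 => inferInstanceAs (Finite PUnit)
  | k + 1 =>
    haveI := Hgrp.finite k
    Finite.of_equiv _ (SemidirectProduct.equivProd (φ := swapHom (Hgrp k))).symm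

instance Pgrp.finite : ∀ k, Finite (Pgrp k)
  | 0 => inferInstanceAs (Finite PUnit)
  | k + 1 => haveI := Pgrp.finite k; inferInstanceAs (Finite (Hgrp k × Pgrp k))

section Characters

variable {G : Type*} [Group G] [Finite G]

theorem Complex.conj_units_hom_eq_inv (χ : G →* ℂˣ) (g : G) :
    starRingEnd ℂ (χ g : ℂ) = ((χ g)⁻¹ : ℂˣ) := by
  have hpow : (χ g : ℂ) ^ Nat.card G = 1 := by
    rw [← Units.val_pow_eq_pow_val, ← map_pow, pow_card_eq_one', map_one, Units.val_one]
  rw [Units.val_inv_eq_inv_val,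
    Complex.inv_eq_conj (Complex.norm_eq_one_of_pow_eq_one hpow Nat.card_pos.ne')]

/-- Orthogonality of the linear characters of a finite group. -/
theorem Complex.finsum_mul_conj_ne_zero_iff (χ ψ : G →* ℂˣ) :
    (∑ᶠ g, (χ g : ℂ) * starRingEnd ℂ (ψ g : ℂ)) ≠ 0 ↔ χ = ψ := by
  have : Fintype G := Fintype.ofFinite G
  have hterm : ∀ g, (χ g : ℂ) * starRingEnd ℂ (ψ g : ℂ) = (Units.coeHom ℂ).comp (χ / ψ) g :=
    fun g => by
      rw [Complex.conj_units_hom_eq_inv, MonoidHom.comp_apply, MonoidHom.div_apply, div_eq_mul_inv]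
      rfl
  have htriv : (Units.coeHom ℂ).comp (χ / ψ) = 1 ↔ χ = ψ := by
    rw [← MonoidHom.comp_one (Units.coeHom ℂ)]
    exact (MonoidHom.cancel_left Units.val_injective).trans (div_eq_one (G := G →* ℂˣ))
  rw [finsum_eq_sum_of_fintype, Finset.sum_congr rfl fun g _ => hterm g, sum_hom_units]
  split_ifs with h <;> rw [htriv] at h
  · simp [h, Fintype.card_ne_zero]
  · simp [h]

end Characters

/-- `S` occurs in the restriction of `T` iff their character inner product is nonzero. -/
theorem one_dim_restriction_unique (k : ℕ) (T : Hgrp k →* ℂˣ) :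
    ∃! S : Pgrp k →* ℂˣ,
      (∑ᶠ g : Pgrp k, (S g : ℂ) * (starRingEnd ℂ) ((T (iota k g) : ℂ))) ≠ 0 :=
  ⟨T.comp (iota k), (Complex.finsum_mul_conj_ne_zero_iff _ (T.comp (iota k))).2 rfl,
    fun S hS => (Complex.finsum_mul_conj_ne_zero_iff S (T.comp (iota k))).1 hS⟩
end

section
/- The poset 𝔹 of sequences of binary strings under the restriction order 𝕃 has infinitely many infinite rays: for every nonempty binary string b and each ε ∈ {0,1}, there is a unique saturated chain in 𝔹 from b up to εb, so the number of infinite ascending rays from the root is infinite. In contrast, the Macdonald tree has exactly two infinite rays; hence the graph of one-dimensional representations of the 2-Sylow subgroups of symmetric groups is not isomorphic to the Macdonald tree. -/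
/-- The restriction operation on a single binary string: repeatedly remove the leading
bit, `𝕃(b) = (b̄, 𝕃(b̄))`, with `𝕃` of a length-one string being empty. -/
def Lstr : List Bool → List (List Bool)
  | [] => []
  | [_] => []
  | _ :: b :: t => (b :: t) :: Lstr (b :: t)

/-- The restriction operation `𝕃` on a sequence of binary strings: it acts on the last
string of the sequence. -/
def LL (s : List (List Bool)) : List (List Bool) :=
  s.dropLast ++ Lstr (s.getLastD [])

/-- A sequence of binary strings is valid when the lengths of its strings are strictly
decreasing (so it encodes a sequence of strings of some size `n`). -/
def ValidSeq (s : List (List Bool)) : Prop :=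
  List.Chain' (· > ·) (s.map List.length)

/-!
Along `𝕃` the size `∑ 2 ^ |bᵢ|` strictly decreases, so a chain is the orbit of its top element,
and its length is forced by its bottom element; `εb` reaches `b` by peeling off the strings of
`𝕃(b)` one at a time. For rays, fix a bit stream `σ` and take at level `n` the strings
`σ(k) ⋯ σ(0)` with `k` running over the binary digits of `n`: on these lengths `𝕃` acts as
binary decrement. Level `2 ^ k` is the single string `σ(k) ⋯ σ(0)`, so distinct streams give
distinct rays. An isomorphism would carry these uncountably many rays injectively to rays of
the other tree, of which there are only finitely many.
-/

section Iterate

variable {α : Type*} {f : α → α}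

theorem List.isChain_iterate (f : α → α) (a : α) (n : ℕ) :
    (List.iterate f a n).IsChain (fun x y => f x = y) := by
  induction n generalizing a with
  | zero => exact List.isChain_nil
  | succ n ih =>
    cases n with
    | zero => exact List.isChain_singleton a
    | succ n => exact List.isChain_cons_cons.mpr ⟨rfl, ih (f a)⟩

theorem List.getLast?_iterate_succ (f : α → α) (a : α) (n : ℕ) :
    (List.iterate f a (n + 1)).getLast? = some (f^[n] a) := by
  induction n generalizing a with
  | zero => rfl
  | succ n ih =>
    rw [List.iterate, List.iterate, List.getLast?_cons_cons, ← List.iterate, ih,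
      Function.iterate_succ_apply]

theorem List.eq_iterate_of_isChain {c : List α} {a : α}
    (hc : c.IsChain (fun x y => f x = y)) (ha : c.head? = some a) :
    c = List.iterate f a c.length := by
  induction c generalizing a with
  | nil => rfl
  | cons x t ih =>
    obtain rfl : x = a := by simpa using ha
    cases t with
    | nil => rfl
    | cons y t =>
      obtain ⟨rfl, ht⟩ := List.isChain_cons_cons.mp hc
      rw [List.length_cons, List.iterate, ← ih ht rfl]

variable {z : α} {μ : α → ℕ}

theorem lt_of_iterate_succ_ne (hz : f z = z) (hμ : ∀ x ≠ z, μ (f x) < μ x) {y : α} {k : ℕ}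
    (hk : f^[k + 1] y ≠ z) : μ (f^[k + 1] y) < μ y := by
  induction k with
  | zero => exact hμ y fun hy => hk (hy ▸ hz)
  | succ k ih =>
    rw [Function.iterate_succ_apply'] at hk ⊢
    have hk' : f^[k + 1] y ≠ z := fun h => hk (h ▸ hz)
    exact (hμ _ hk').trans (ih hk')

theorem eq_of_iterate_eq_of_ne (hz : f z = z) (hμ : ∀ x ≠ z, μ (f x) < μ x) {a : α} {m n : ℕ}
    (h : f^[m] a = f^[n] a) (hn : f^[n] a ≠ z) : m = n := by
  by_contra hmn
  wlog hlt : m < n generalizing m n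
  · exact this h.symm (h ▸ hn) (Ne.symm hmn) (by omega)
  obtain ⟨k, rfl⟩ := Nat.exists_eq_add_of_lt hlt
  rw [add_assoc, add_comm, Function.iterate_add_apply] at h hn
  exact (lt_of_iterate_succ_ne hz hμ hn).ne' (congrArg μ h)

theorem existsUnique_isChain_of_iterate_eq (hz : f z = z) (hμ : ∀ x ≠ z, μ (f x) < μ x)
    {a b : α} {n : ℕ} (hn : f^[n] a = b) (hb : b ≠ z) :
    ∃! c : List α, c.IsChain (fun x y => f x = y) ∧ c.head? = some a ∧ c.getLast? = some b := by
  refine ⟨List.iterate f a (n + 1),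
    ⟨List.isChain_iterate f a _, rfl, by rw [List.getLast?_iterate_succ, hn]⟩, ?_⟩
  rintro c ⟨hc, ha, hlast⟩
  obtain ⟨k, hk⟩ : ∃ k, c.length = k + 1 :=
    Nat.exists_eq_succ_of_ne_zero fun h => by simp [List.length_eq_zero_iff.mp h] at ha
  rw [List.eq_iterate_of_isChain hc ha, hk, List.getLast?_iterate_succ, Option.some_inj] at hlast
  rw [List.eq_iterate_of_isChain hc ha, hk,
    eq_of_iterate_eq_of_ne hz hμ (hlast.trans hn.symm) (hn ▸ hb)]

end Iterate

def seqSize (s : List (List Bool)) : ℕ := (s.map (2 ^ ·.length)).sum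

theorem LL_nil : LL [] = [] := rfl

theorem LL_append_singleton (s : List (List Bool)) (t : List Bool) :
    LL (s ++ [t]) = s ++ Lstr t := by
  rw [LL, List.dropLast_concat, List.getLastD_concat]

theorem seqSize_Lstr_lt (t : List Bool) : seqSize (Lstr t) < 2 ^ t.length := by
  induction t with
  | nil => simp [Lstr, seqSize]
  | cons _ u ih =>
    cases u with
    | nil => simp [Lstr, seqSize]
    | cons x u =>
      simp only [Lstr, seqSize, List.map_cons, List.sum_cons, List.length_cons] at ih ⊢
      omega

theorem seqSize_LL_lt {s : List (List Bool)} (hs : s ≠ []) : seqSize (LL s) < seqSize s := by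
  obtain ⟨p, t, rfl⟩ := (List.eq_nil_or_concat' s).resolve_left hs
  have := seqSize_Lstr_lt t
  simp only [LL_append_singleton, seqSize, List.map_append, List.sum_append, List.map_singleton,
    List.sum_singleton] at this ⊢
  omega

theorem exists_iterate_LL_append_Lstr (t : List Bool) (s : List (List Bool)) :
    ∃ m, LL^[m] (s ++ Lstr t) = s := by
  induction t generalizing s with
  | nil => exact ⟨0, by simp [Lstr]⟩
  | cons _ u ih =>
    cases u with
    | nil => exact ⟨0, by simp [Lstr]⟩
    | cons x u =>
      obtain ⟨m₁, hm₁⟩ := ih (s ++ [x :: u])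
      obtain ⟨m₂, hm₂⟩ := ih s
      refine ⟨m₂ + 1 + m₁, ?_⟩
      rw [Lstr, ← List.singleton_append, ← List.append_assoc, Function.iterate_add_apply, hm₁,
        Function.iterate_add_apply, Function.iterate_one, LL_append_singleton, hm₂]

theorem existsUnique_chain_cons_singleton {b : List Bool} (hb : b ≠ []) (ε : Bool) :
    ∃! c : List (List (List Bool)),
      c.IsChain (fun x y => LL x = y) ∧ c.head? = some [ε :: b] ∧ c.getLast? = some [b] := by
  obtain ⟨m, hm⟩ := exists_iterate_LL_append_Lstr b [b]
  have hstep : LL [ε :: b] = [b] ++ Lstr b := by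
    obtain ⟨x, u, rfl⟩ := List.exists_cons_of_ne_nil hb
    rfl
  refine existsUnique_isChain_of_iterate_eq LL_nil (fun _ => seqSize_LL_lt) (n := m + 1) ?_
    (List.cons_ne_nil _ _)
  rw [Function.iterate_succ_apply, hstep, hm]

def revPrefix (σ : ℕ → Bool) : ℕ → List Bool
  | 0 => []
  | k + 1 => σ k :: revPrefix σ k

theorem length_revPrefix (σ : ℕ → Bool) (k : ℕ) : (revPrefix σ k).length = k := by
  induction k with
  | zero => rfl
  | succ k ih => simp [revPrefix, ih]

def lstrLengths : ℕ → List ℕ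
  | 0 => []
  | 1 => []
  | k + 2 => (k + 1) :: lstrLengths (k + 1)

def llLengths (l : List ℕ) : List ℕ := l.dropLast ++ lstrLengths (l.getLastD 0)

theorem Lstr_revPrefix (σ : ℕ → Bool) (k : ℕ) :
    Lstr (revPrefix σ k) = (lstrLengths k).map (revPrefix σ) := by
  induction k with
  | zero => rfl
  | succ k ih =>
    cases k with
    | zero => rfl
    | succ k => simp [revPrefix, Lstr, lstrLengths, ← ih]

theorem LL_map_revPrefix (σ : ℕ → Bool) (l : List ℕ) :
    LL (l.map (revPrefix σ)) = (llLengths l).map (revPrefix σ) := by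
  rw [LL, llLengths, List.map_append, ← Lstr_revPrefix, List.map_dropLast,
    show ([] : List Bool) = revPrefix σ 0 from rfl, List.getLastD_map]

theorem lstrLengths_add_two (k : ℕ) :
    lstrLengths (k + 2) = (lstrLengths (k + 1)).map (· + 1) ++ [1] := by
  induction k with
  | zero => rfl
  | succ k ih =>
    change (k + 2) :: lstrLengths (k + 2) = ((k + 1) :: lstrLengths (k + 1)).map (· + 1) ++ [1]
    rw [ih]
    rfl

theorem llLengths_append_singleton (l : List ℕ) (k : ℕ) :
    llLengths (l ++ [k]) = l ++ lstrLengths k := by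
  rw [llLengths, List.dropLast_concat, List.getLastD_concat]

theorem llLengths_map_succ {l : List ℕ} (hl : l ≠ []) (h0 : 0 ∉ l) :
    llLengths (l.map (· + 1)) = (llLengths l).map (· + 1) ++ [1] := by
  obtain ⟨p, k, rfl⟩ := (List.eq_nil_or_concat' l).resolve_left hl
  obtain ⟨k, rfl⟩ := Nat.exists_eq_succ_of_ne_zero (by rintro rfl; simp at h0 : k ≠ 0)
  simp [llLengths_append_singleton, lstrLengths_add_two]

-- Shifted by one because `Lstr` never produces the empty string.
def binLengths (n : ℕ) : List ℕ := ((Nat.bitIndices n).map (· + 1)).reverse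

theorem binLengths_two_mul (n : ℕ) : binLengths (2 * n) = (binLengths n).map (· + 1) := by
  simp [binLengths, List.map_reverse]

theorem binLengths_two_mul_add_one (n : ℕ) :
    binLengths (2 * n + 1) = (binLengths n).map (· + 1) ++ [1] := by
  simp [binLengths, List.map_reverse]

theorem binLengths_two_pow (k : ℕ) : binLengths (2 ^ k) = [k + 1] := by
  simp [binLengths]

theorem binLengths_eq_nil {n : ℕ} : binLengths n = [] ↔ n = 0 := by
  refine ⟨fun h => ?_, fun h => by simp [h, binLengths]⟩
  rw [← Nat.sum_map_two_pow_bitIndices n]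
  simp_all [binLengths]

theorem zero_notMem_binLengths (n : ℕ) : 0 ∉ binLengths n := by
  simp [binLengths]

theorem isChain_gt_binLengths (n : ℕ) : (binLengths n).IsChain (· > ·) := by
  rw [binLengths, List.isChain_reverse, List.isChain_map]
  exact Nat.bitIndices_sorted.isChain.imp fun _ _ h => by simpa using h

theorem llLengths_binLengths_succ (n : ℕ) : llLengths (binLengths (n + 1)) = binLengths n := by
  induction n using Nat.strong_induction_on with
  | _ n ih =>
    obtain ⟨m, rfl | rfl⟩ := Nat.even_or_odd' n
    · rw [binLengths_two_mul_add_one, llLengths_append_singleton, binLengths_two_mul]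
      exact List.append_nil _
    · rw [show 2 * m + 1 + 1 = 2 * (m + 1) by ring, binLengths_two_mul,
        llLengths_map_succ (binLengths_eq_nil.not.mpr m.succ_ne_zero) (zero_notMem_binLengths _),
        ih m (by omega), binLengths_two_mul_add_one]

def ray (σ : ℕ → Bool) (n : ℕ) : List (List Bool) := (binLengths n).map (revPrefix σ)

def IsRay (f : ℕ → List (List Bool)) : Prop :=
  f 0 = [] ∧ ∀ n, LL (f (n + 1)) = f n ∧ f (n + 1) ≠ [] ∧ ValidSeq (f (n + 1))

theorem LL_ray_succ (σ : ℕ → Bool) (n : ℕ) : LL (ray σ (n + 1)) = ray σ n := by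
  rw [ray, LL_map_revPrefix, llLengths_binLengths_succ, ray]

theorem ray_succ_ne_nil (σ : ℕ → Bool) (n : ℕ) : ray σ (n + 1) ≠ [] := by
  simp [ray, binLengths_eq_nil]

theorem validSeq_ray (σ : ℕ → Bool) (n : ℕ) : ValidSeq (ray σ n) := by
  rw [ValidSeq, ray, List.map_map, show List.length ∘ revPrefix σ = id from
    funext (length_revPrefix σ), List.map_id]
  exact isChain_gt_binLengths n

theorem isRay_ray (σ : ℕ → Bool) : IsRay (ray σ) :=
  ⟨by simp [ray, binLengths], fun n => ⟨LL_ray_succ σ n, ray_succ_ne_nil σ n, validSeq_ray σ _⟩⟩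

theorem ray_injective : Function.Injective ray := by
  intro σ τ h
  funext k
  have := congrFun h (2 ^ k)
  simp only [ray, binLengths_two_pow, List.map_singleton, revPrefix, List.cons.injEq] at this
  exact this.1.1

theorem validSeq_nil : ValidSeq [] := List.isChain_nil

theorem not_exists_equiv_of_finite_rays {V : Type*} (r : V → V → Prop) (root : V)
    (hfin : {g : ℕ → V | g 0 = root ∧ ∀ n, r (g n) (g (n + 1))}.Finite) :
    ¬∃ e : {s : List (List Bool) // ValidSeq s} ≃ V,
      e ⟨[], validSeq_nil⟩ = root ∧
      ∀ x y : {s : List (List Bool) // ValidSeq s}, (LL x.1 = y.1 ∧ x.1 ≠ []) ↔ r (e y) (e x) := by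
  rintro ⟨e, he_root, he_rel⟩
  let transport : (ℕ → Bool) → ℕ → V := fun σ n => e ⟨ray σ n, validSeq_ray σ n⟩
  have h_inj : Function.Injective transport := fun σ τ h =>
    ray_injective <| funext fun n => congrArg Subtype.val (e.injective (congrFun h n))
  refine Set.infinite_range_of_injective h_inj (hfin.subset ?_)
  rintro _ ⟨σ, rfl⟩
  exact ⟨he_root, fun n => (he_rel _ _).mp ⟨LL_ray_succ σ n, ray_succ_ne_nil σ n⟩⟩

/-- The poset `𝔹` of sequences of binary strings under the restriction order `𝕃` has
infinitely many infinite rays: for every nonempty binary string `b` and bit `ε` there is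
a unique saturated chain from `εb` down to `b`, and the set of infinite ascending rays
from the root is infinite.  Consequently `𝔹` is not isomorphic (as a rooted covering
graph) to any rooted tree with exactly two infinite rays — in particular not to the
Macdonald tree. -/
theorem one_dim_graph_not_macdonald :
    (∀ b : List Bool, b ≠ [] → ∀ ε : Bool,
      ∃! c : List (List (List Bool)),
        List.Chain' (fun x y => LL x = y) c ∧
        c.head? = some [ε :: b] ∧ c.getLast? = some [b]) ∧
    Set.Infinite {f : ℕ → List (List Bool) |
      f 0 = [] ∧ ∀ n, LL (f (n + 1)) = f n ∧ f (n + 1) ≠ [] ∧ ValidSeq (f (n + 1))} ∧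
    (∀ (V : Type) (r : V → V → Prop) (root : V),
      (∃ g₁ g₂ : ℕ → V, g₁ ≠ g₂ ∧
        {g : ℕ → V | g 0 = root ∧ ∀ n, r (g n) (g (n + 1))} = {g₁, g₂}) →
      ¬∃ e : {s : List (List Bool) // ValidSeq s} ≃ V,
        e ⟨[], by unfold ValidSeq; first | exact List.isChain_nil | exact List.chain'_nil | constructor | simp [List.Chain']⟩ = root ∧
        ∀ x y : {s : List (List Bool) // ValidSeq s},
          (LL x.1 = y.1 ∧ x.1 ≠ []) ↔ r (e y) (e x)) := by
  refine ⟨fun b hb ε => existsUnique_chain_cons_singleton hb ε,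
    Set.infinite_of_injective_forall_mem ray_injective isRay_ray, ?_⟩
  rintro V r root ⟨g₁, g₂, -, hrays⟩
  exact not_exists_equiv_of_finite_rays r root (hrays ▸ Set.toFinite _)
end
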